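/- The unique global minimizer c* of H satisfies 0.5275 < c* < 0.5277. -/

import Mathlib

/-!
`H` is convex because its integrand is convex in `c`. Integrating along the lines
`x₁ + x₂ = s`, i.e. after the measure-preserving shear `(x₁, x₂) ↦ (x₁, x₁ + x₂)`, gives
`H c = ∫_{-1}^{1} (s + 2) e^{-cs} ds`, hence the closed form of `H` and, for `c ≠ 0`,
`H' c = ((c² - 2) e^c + (3c² + 4c + 2) e^{-c}) / c³`. Taylor bounds on `e^{0.5275}` and
`e^{0.5277}` give `H' 0.5275 < 0 < H' 0.5277`, and a convex function cannot attain its minimum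
to the left of a point where its derivative is negative, nor to the right of one where it is
positive.
-/

open MeasureTheory Real Set

/-- The closed trapezium with vertices (2,-1), (-1,2), (-1,0), (0,-1). -/
def T : Set (ℝ × ℝ) :=
  {p : ℝ × ℝ | -1 ≤ p.1 ∧ -1 ≤ p.2 ∧ -1 ≤ p.1 + p.2 ∧ p.1 + p.2 ≤ 1}

/-- `H c = ∫_T e^{-c(x₁+x₂)} dx₁ dx₂` (Lebesgue measure on ℝ²). -/
noncomputable def H (c : ℝ) : ℝ := ∫ p in T, Real.exp (-c * (p.1 + p.2))

open Topology

theorem convexOn_integral {E α : Type*} [AddCommGroup E] [Module ℝ E] [MeasurableSpace α]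
    {μ : Measure α} {s : Set E} {F : E → α → ℝ} (hs : Convex ℝ s)
    (hF : ∀ x, ConvexOn ℝ s (F · x)) (hint : ∀ c ∈ s, Integrable (F c) μ) :
    ConvexOn ℝ s (fun c => ∫ x, F c x ∂μ) := by
  refine ⟨hs, fun a ha b hb t u ht hu htu => ?_⟩
  have hta := (hint a ha).const_mul t
  have hub := (hint b hb).const_mul u
  calc ∫ x, F (t • a + u • b) x ∂μ ≤ ∫ x, (t * F a x + u * F b x) ∂μ :=
        integral_mono (hint _ (hs ha hb ht hu htu)) (hta.add hub)
          fun x => (hF x).2 ha hb ht hu htu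
    _ = t • ∫ x, F a x ∂μ + u • ∫ x, F b x ∂μ := by
        rw [integral_add hta hub, integral_const_mul, integral_const_mul, smul_eq_mul, smul_eq_mul]

theorem setIntegral_prod_comp_snd {α β E : Type*} [MeasurableSpace α] [MeasurableSpace β]
    [NormedAddCommGroup E] [NormedSpace ℝ E] [CompleteSpace E] {μ : Measure α} {ν : Measure β}
    [SFinite μ] [SFinite ν] {S : Set (α × β)} (hS : MeasurableSet S) {g : β → E}
    (hg : IntegrableOn (fun q => g q.2) S (μ.prod ν)) :
    ∫ q in S, g q.2 ∂(μ.prod ν) = ∫ y, μ.real ((fun x => (x, y)) ⁻¹' S) • g y ∂ν := by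
  rw [← integral_indicator hS, integral_prod_symm _ ((integrable_indicator_iff hS).2 hg)]
  refine integral_congr_ae (ae_of_all _ fun y => ?_)
  dsimp only
  rw [← integral_indicator_const _ (measurable_prodMk_right hS)]
  rfl

namespace ConvexOn

variable {f : ℝ → ℝ} {S : Set ℝ} {a m f' : ℝ}

theorem lt_of_isMinOn_of_hasDerivAt_neg (hf : ConvexOn ℝ S f) (hS : S ∈ 𝓝 a)
    (hm : IsMinOn f S m) (hmS : m ∈ S) (ha : HasDerivAt f f' a) (hf' : f' < 0) : a < m := by
  by_contra! hma
  rcases hma.lt_or_eq with hma | rfl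
  · have hslope := hf.slope_le_of_hasDerivAt hmS (mem_of_mem_nhds hS) hma ha
    have : 0 ≤ slope f m a := by
      rw [slope_def_field]
      exact div_nonneg (sub_nonneg.2 (hm (mem_of_mem_nhds hS))) (sub_nonneg.2 hma.le)
    linarith
  · exact hf'.ne ((hm.isLocalMin hS).hasDerivAt_eq_zero ha)

theorem lt_of_isMinOn_of_hasDerivAt_pos (hf : ConvexOn ℝ S f) (hS : S ∈ 𝓝 a)
    (hm : IsMinOn f S m) (hmS : m ∈ S) (ha : HasDerivAt f f' a) (hf' : 0 < f') : m < a := by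
  by_contra! ham
  rcases ham.lt_or_eq with ham | rfl
  · have hslope := hf.le_slope_of_hasDerivAt (mem_of_mem_nhds hS) hmS ham ha
    have : slope f a m ≤ 0 := by
      rw [slope_def_field]
      exact div_nonpos_of_nonpos_of_nonneg (sub_nonpos.2 (hm (mem_of_mem_nhds hS)))
        (sub_nonneg.2 ham.le)
    linarith
  · exact hf'.ne' ((hm.isLocalMin hS).hasDerivAt_eq_zero ha)

end ConvexOn

lemma T_subset_Icc : T ⊆ Icc (-1, -1) (2, 2) := by
  rintro ⟨x, y⟩ ⟨h1, h2, h3, h4⟩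
  exact ⟨⟨h1, h2⟩, by dsimp at *; linarith, by dsimp at *; linarith⟩

lemma convexOn_H : ConvexOn ℝ univ H := by
  refine convexOn_integral convex_univ (fun p => ?_) fun c _ => ?_
  · simpa [Function.comp_def] using
      convexOn_exp.comp_linearMap (-(LinearMap.id : ℝ →ₗ[ℝ] ℝ).smulRight (p.1 + p.2))
  · exact ((continuous_exp.comp (continuous_const.mul (continuous_fst.add continuous_snd))
      ).integrableOn_Icc).mono_set T_subset_Icc

def shearedT : Set (ℝ × ℝ) := {q | q.1 ∈ Icc (-1) (q.2 + 1) ∧ q.2 ∈ Icc (-1) 1}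

lemma preimage_shearedT : (fun p : ℝ × ℝ => (p.1, p.1 + p.2)) ⁻¹' shearedT = T := by
  ext ⟨x, y⟩
  simp only [shearedT, T, mem_preimage, mem_ofPred_eq, mem_Icc]
  constructor
  · rintro ⟨⟨h1, h2⟩, h3, h4⟩
    exact ⟨h1, by linarith, h3, h4⟩
  · rintro ⟨h1, h2, h3, h4⟩
    exact ⟨⟨h1, by linarith⟩, h3, h4⟩

lemma measurableSet_shearedT : MeasurableSet shearedT := by
  unfold shearedT
  measurability

lemma shearedT_subset_Icc : shearedT ⊆ Icc (-1, -1) (2, 1) := by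
  rintro ⟨x, s⟩ ⟨⟨h1, h2⟩, h3, h4⟩
  exact ⟨⟨h1, h3⟩, by dsimp at *; linarith, h4⟩

lemma measureReal_slice_shearedT (s : ℝ) :
    volume.real ((fun x => (x, s)) ⁻¹' shearedT) = (Icc (-1) 1).indicator (· + 2) s := by
  by_cases hs : s ∈ Icc (-1 : ℝ) 1
  · have hslice : (fun x => (x, s)) ⁻¹' shearedT = Icc (-1) (s + 1) := by
      ext x
      simp [shearedT, hs.1, hs.2]
    rw [hslice, volume_real_Icc_of_le (by linarith [hs.1]), indicator_of_mem hs]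
    ring
  · have hslice : (fun x => (x, s)) ⁻¹' shearedT = ∅ :=
      eq_empty_of_forall_notMem fun x hx => hs hx.2
    simp [hslice, hs]

lemma H_eq_intervalIntegral (c : ℝ) : H c = ∫ s in (-1)..1, (s + 2) * exp (-c * s) := by
  calc H c = ∫ q in shearedT, exp (-c * q.2) ∂((volume : Measure ℝ).prod volume) := by
        rw [H, ← preimage_shearedT, ← Measure.volume_eq_prod]
        exact (measurePreserving_prod_add volume volume).setIntegral_preimage_emb
          (MeasurableEquiv.shearAddRight ℝ).measurableEmbedding (fun q => exp (-c * q.2)) shearedT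
    _ = ∫ s, (Icc (-1) 1).indicator (fun s => (s + 2) * exp (-c * s)) s := by
        rw [setIntegral_prod_comp_snd (g := fun s => exp (-c * s)) measurableSet_shearedT]
        · congr 1 with s
          rw [measureReal_slice_shearedT, smul_eq_mul, indicator_mul_left]
        · exact ((continuous_exp.comp (continuous_const.mul continuous_snd)).integrableOn_Icc
            ).mono_set shearedT_subset_Icc
    _ = ∫ s in (-1)..1, (s + 2) * exp (-c * s) := by
        rw [integral_indicator measurableSet_Icc, integral_Icc_eq_integral_Ioc,
          intervalIntegral.integral_of_le (by norm_num)]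

lemma H_eq_of_ne_zero {c : ℝ} (hc : c ≠ 0) :
    H c = ((1 + c) * exp c - (1 + 3 * c) * exp (-c)) / c ^ 2 := by
  have antideriv (s : ℝ) : HasDerivAt (fun s => -((s + 2) / c + 1 / c ^ 2) * exp (-c * s))
      ((s + 2) * exp (-c * s)) s := by
    refine (((((hasDerivAt_id' s).add_const 2).div_const c).add_const (1 / c ^ 2)).fun_neg.fun_mul
      (((hasDerivAt_id' s).const_mul (-c)).exp)).congr_deriv ?_
    field_simp
    ring
  have hcont : Continuous fun s => (s + 2) * exp (-c * s) := by fun_prop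
  rw [H_eq_intervalIntegral, intervalIntegral.integral_eq_sub_of_hasDerivAt
    (fun s _ => antideriv s) (hcont.intervalIntegrable _ _)]
  field_simp
  ring

noncomputable def Hderiv (c : ℝ) : ℝ :=
  ((c ^ 2 - 2) * exp c + (3 * c ^ 2 + 4 * c + 2) * exp (-c)) / c ^ 3

lemma hasDerivAt_H {c : ℝ} (hc : c ≠ 0) : HasDerivAt H (Hderiv c) c := by
  have hclosed := ((((hasDerivAt_id' c).const_add 1).fun_mul (hasDerivAt_exp c)).fun_sub
    ((((hasDerivAt_id' c).const_mul 3).const_add 1).fun_mul (hasDerivAt_neg' c).exp)).fun_div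
    (hasDerivAt_pow 2 c) (pow_ne_zero 2 hc)
  refine (hclosed.congr_of_eventuallyEq ?_).congr_deriv ?_
  · filter_upwards [eventually_ne_nhds hc] with c' hc' using H_eq_of_ne_zero hc'
  · simp only [Hderiv]
    field_simp
    ring

lemma exp_0_5275_gt : 1.69469 < exp 0.5275 :=
  lt_of_lt_of_le (by norm_num [Finset.sum_range_succ, Nat.factorial])
    (sum_le_exp_of_nonneg (by norm_num) 9)

lemma exp_0_5277_lt : exp 0.5277 < 1.69503 :=
  (exp_bound' (by norm_num) (by norm_num) (n := 8) (by norm_num)).trans_lt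
    (by norm_num [Finset.sum_range_succ, Nat.factorial])

lemma Hderiv_0_5275_neg : Hderiv 0.5275 < 0 := by
  have hE := exp_0_5275_gt
  have hE0 := exp_pos 0.5275
  refine div_neg_of_neg_of_pos ?_ (by norm_num)
  rw [exp_neg]
  field_simp
  nlinarith

lemma Hderiv_0_5277_pos : 0 < Hderiv 0.5277 := by
  have hE := exp_0_5277_lt
  have hE0 := exp_pos 0.5277
  refine div_pos ?_ (by norm_num)
  rw [exp_neg]
  field_simp
  nlinarith

/-- The unique global minimizer `cs` of `H` satisfies `0.5275 < cs < 0.5277`. -/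
theorem stmt_10 (cs : ℝ) (hmin : ∀ c : ℝ, H cs ≤ H c) :
    0.5275 < cs ∧ cs < 0.5277 := by
  have hcs : IsMinOn H univ cs := fun c _ => hmin c
  exact ⟨convexOn_H.lt_of_isMinOn_of_hasDerivAt_neg Filter.univ_mem hcs (mem_univ cs)
      (hasDerivAt_H (by norm_num)) Hderiv_0_5275_neg,
    convexOn_H.lt_of_isMinOn_of_hasDerivAt_pos Filter.univ_mem hcs (mem_univ cs)
      (hasDerivAt_H (by norm_num)) Hderiv_0_5277_pos⟩
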